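/- Let H be a separable complex Hilbert space and let {T(t)}_{t∈ℝ} be a family of densely defined closed linear operators in H (so that each adjoint T(t)* is also densely defined and closed). Then the family {T(t)}_{t∈ℝ} is N-measurable if and only if the family of adjoints {T(t)*}_{t∈ℝ} is N-measurable. -/

import Mathlib

/-! The graph of `T*` is `J (Γ(T)ᗮ)` for the unitary `J (x, y) = (y, -x)` of `H ⊕ H`, so if `P` is
the projection onto `Γ(T)`, the projection onto `Γ(T*)` is `J (1 - P) J⁻¹`, with entries
`1 - P₁₁, P₁₀, P₀₁, 1 - P₀₀`; weak measurability passes through these. Conversely, a closed `T`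
has `Γ(T) = Γ(T)ᗮᗮ`, which makes `Γ(T)` the adjoint graph of `T*`, so the same formula goes back. -/

open MeasureTheory

noncomputable section

variable {H : Type*} [NormedAddCommGroup H] [InnerProductSpace ℂ H]

/-- A family of vectors `g : ℝ → H` is weakly (Lebesgue) measurable if `t ↦ ⟪h, g t⟫` is
Lebesgue measurable for every `h ∈ H`. -/
def WeakMeasVec (g : ℝ → H) : Prop :=
  ∀ h : H, AEMeasurable (fun t : ℝ => (inner ℂ h (g t) : ℂ)) volume

/-- A family of bounded operators `A : ℝ → B(H)` is weakly measurable. -/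
def WeakMeasOp (A : ℝ → H →L[ℂ] H) : Prop :=
  ∀ h k : H, AEMeasurable (fun t : ℝ => (inner ℂ h (A t k) : ℂ)) volume

/-- A family of (in general unbounded) linear operators in `H` is weakly measurable if it
maps weakly measurable families of vectors in the domains to weakly measurable families. -/
def WeakMeasFam (T : ℝ → (H →ₗ.[ℂ] H)) : Prop :=
  ∀ f : (t : ℝ) → (T t).domain,
    WeakMeasVec (fun t => (f t : H)) → WeakMeasVec (fun t => T t (f t))

/-- `P` is the characteristic matrix of `T`: the `2 × 2` block operator matrix of the
orthogonal projection of `H ⊕ H` onto the graph of `T`. -/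
def IsCharMatrix (T : H →ₗ.[ℂ] H) (P : Fin 2 → Fin 2 → (H →L[ℂ] H)) : Prop :=
  (∀ x y : H, (P 0 0 x + P 0 1 y, P 1 0 x + P 1 1 y) ∈ T.graph) ∧
  (∀ x y : H, ∀ u : T.domain,
    (inner ℂ (x - (P 0 0 x + P 0 1 y)) (u : H) : ℂ)
      + (inner ℂ (y - (P 1 0 x + P 1 1 y)) (T u) : ℂ) = 0)

/-- N-measurability of a family of densely defined closed operators: the entries of the
characteristic matrices form weakly measurable families of bounded operators. -/
def NMeas (T : ℝ → (H →ₗ.[ℂ] H)) : Prop :=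
  ∃ P : ℝ → Fin 2 → Fin 2 → (H →L[ℂ] H),
    (∀ t, IsCharMatrix (T t) (P t)) ∧ ∀ j k : Fin 2, WeakMeasOp (fun t => P t j k)

/-- `R = (T - z I)⁻¹ ∈ B(H)`, i.e. `z` lies in the resolvent set of `T` with resolvent `R`. -/
def IsResolvent (T : H →ₗ.[ℂ] H) (z : ℂ) (R : H →L[ℂ] H) : Prop :=
  (∀ x : H, ∃ hx : R x ∈ T.domain, T ⟨R x, hx⟩ - z • R x = x) ∧
  (∀ y : T.domain, R (T y - z • (y : H)) = (y : H))

/-- `B = (T⋆ T + I)⁻¹ ∈ B(H)`. -/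
def IsInvTstarTAddI [CompleteSpace H] (T : H →ₗ.[ℂ] H) (B : H →L[ℂ] H) : Prop :=
  ∀ x : H, ∃ (h1 : B x ∈ T.domain) (h2 : T ⟨B x, h1⟩ ∈ T.adjoint.domain),
    T.adjoint ⟨T ⟨B x, h1⟩, h2⟩ + B x = x

/-- `C = T B`. -/
def IsTComp (T : H →ₗ.[ℂ] H) (B C : H →L[ℂ] H) : Prop :=
  ∀ x : H, ∃ h1 : B x ∈ T.domain, T ⟨B x, h1⟩ = C x

/-- `D = (T T⋆ + I)⁻¹ ∈ B(H)`. -/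
def IsInvTTstarAddI [CompleteSpace H] (T : H →ₗ.[ℂ] H) (D : H →L[ℂ] H) : Prop :=
  ∀ x : H, ∃ (h1 : D x ∈ T.adjoint.domain) (h2 : T.adjoint ⟨D x, h1⟩ ∈ T.domain),
    T ⟨T.adjoint ⟨D x, h1⟩, h2⟩ + D x = x

/-- `T` is a symmetric operator. -/
def IsSymmPMap (T : H →ₗ.[ℂ] H) : Prop :=
  ∀ x y : T.domain, (inner ℂ (x : H) (T y) : ℂ) = inner ℂ (T x) (y : H)

/-- `T` is an unbounded operator. -/
def UnboundedPMap (T : H →ₗ.[ℂ] H) : Prop :=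
  ¬ ∃ C : ℝ, ∀ x : T.domain, ‖T x‖ ≤ C * ‖(x : H)‖

namespace Submodule

variable {𝕜 E F : Type*} [RCLike 𝕜] [NormedAddCommGroup E] [InnerProductSpace 𝕜 E]
  [NormedAddCommGroup F] [InnerProductSpace 𝕜 F]

theorem le_adjoint_adjoint (g : Submodule 𝕜 (E × F)) : g ≤ g.adjoint.adjoint := by
  intro x hx
  rw [mem_adjoint_iff]
  intro a b hab
  have h := congrArg (starRingEnd 𝕜) ((mem_adjoint_iff g (a, b)).mp hab x.1 x.2 hx)
  simp only [map_sub, inner_conj_symm, map_zero] at h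
  rw [← neg_eq_zero, neg_sub, h]

/-- Transported to `WithLp 2 (E × F)`, this is `Kᗮᗮ = K` for closed `K`. -/
theorem adjoint_adjoint [CompleteSpace E] [CompleteSpace F] {g : Submodule 𝕜 (E × F)}
    (hg : IsClosed (g : Set (E × F))) : g.adjoint.adjoint = g := by
  refine le_antisymm (fun x hx => ?_) g.le_adjoint_adjoint
  set K : Submodule 𝕜 (WithLp 2 (E × F)) :=
    g.comap (WithLp.linearEquiv 2 𝕜 (E × F) : WithLp 2 (E × F) →ₗ[𝕜] E × F)
  have hK : IsClosed (K : Set (WithLp 2 (E × F))) :=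
    hg.preimage (WithLp.prod_continuous_ofLp 2 E F)
  suffices WithLp.toLp 2 x ∈ Kᗮᗮ by
    rwa [orthogonal_orthogonal_eq_closure, hK.submodule_topologicalClosure_eq] at this
  rw [mem_orthogonal]
  intro w hw
  -- `w ⊥ g` says exactly that the skew-swapped `(w₂, -w₁)` lies in `g.adjoint`
  have hw_adj : (w.snd, -w.fst) ∈ g.adjoint := by
    rw [mem_adjoint_iff]
    intro c d hcd
    have h := (mem_orthogonal K w).mp hw (WithLp.toLp 2 (c, d)) hcd
    rw [WithLp.prod_inner_apply] at h
    simp only [inner_neg_right, sub_neg_eq_add]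
    rw [add_comm]
    exact h
  have h := (mem_adjoint_iff _ x).mp hx _ _ hw_adj
  rw [WithLp.prod_inner_apply, WithLp.ofLp_fst, WithLp.ofLp_snd]
  simp only [inner_neg_left] at h
  linear_combination -h

end Submodule

theorem LinearPMap.IsClosed.graph_eq_adjoint_graph_adjoint {𝕜 E : Type*} [RCLike 𝕜]
    [NormedAddCommGroup E] [InnerProductSpace 𝕜 E] [CompleteSpace E] {T : E →ₗ.[𝕜] E}
    (hd : Dense (T.domain : Set E)) (hc : T.IsClosed) : T.graph = T.adjoint.graph.adjoint := by
  rw [LinearPMap.adjoint_graph_eq_graph_adjoint hd, Submodule.adjoint_adjoint hc]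

def charMatrixAdjoint (P : Fin 2 → Fin 2 → (H →L[ℂ] H)) : Fin 2 → Fin 2 → (H →L[ℂ] H) :=
  ![![1 - P 1 1, P 1 0], ![P 0 1, 1 - P 0 0]]

theorem IsCharMatrix.of_graph_eq_adjoint {S T : H →ₗ.[ℂ] H} (hST : S.graph = T.graph.adjoint)
    {P : Fin 2 → Fin 2 → (H →L[ℂ] H)} (hP : IsCharMatrix T P) :
    IsCharMatrix S (charMatrixAdjoint P) := by
  obtain ⟨hP_graph, hP_orth⟩ := hP
  simp only [IsCharMatrix, charMatrixAdjoint, Matrix.cons_val_zero, Matrix.cons_val_one,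
    sub_apply, one_apply_eq_self]
  constructor
  · intro x y
    rw [hST, Submodule.mem_adjoint_iff]
    intro a b hab
    obtain ⟨u, rfl, rfl⟩ := (LinearPMap.mem_graph_iff T).mp hab
    have h := congrArg (starRingEnd ℂ) (hP_orth (-y) x u)
    simp only [map_add, inner_conj_symm, map_zero, map_neg, inner_sub_right, inner_add_right,
      inner_neg_right] at h ⊢
    linear_combination h
  · intro x y v
    have hv : ((v : H), S v) ∈ T.graph.adjoint := hST ▸ S.mem_graph v
    have h := (Submodule.mem_adjoint_iff _ _).mp hv _ _ (hP_graph (-y) x)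
    simp only [map_neg, inner_sub_left, inner_add_left, inner_neg_left] at h ⊢
    linear_combination h

theorem WeakMeasOp.one_sub {A : ℝ → H →L[ℂ] H} (hA : WeakMeasOp A) :
    WeakMeasOp (fun t => 1 - A t) := by
  intro h k
  simp only [sub_apply, one_apply_eq_self, inner_sub_right]
  exact aemeasurable_const.sub (hA h k)

theorem WeakMeasOp.charMatrixAdjoint {P : ℝ → Fin 2 → Fin 2 → (H →L[ℂ] H)}
    (hP : ∀ j k, WeakMeasOp (fun t => P t j k)) (j k : Fin 2) :
    WeakMeasOp (fun t => charMatrixAdjoint (P t) j k) := by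
  fin_cases j <;> fin_cases k
  exacts [(hP 1 1).one_sub, hP 1 0, hP 0 1, (hP 0 0).one_sub]

theorem NMeas.of_graph_eq_adjoint {S T : ℝ → H →ₗ.[ℂ] H}
    (hST : ∀ t, (S t).graph = (T t).graph.adjoint) (hT : NMeas T) : NMeas S := by
  obtain ⟨P, hP_char, hP_meas⟩ := hT
  exact ⟨fun t => charMatrixAdjoint (P t), fun t => (hP_char t).of_graph_eq_adjoint (hST t),
    WeakMeasOp.charMatrixAdjoint hP_meas⟩

theorem stmt_6_general {H : Type*} [NormedAddCommGroup H] [InnerProductSpace ℂ H]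
    [CompleteSpace H]
    (T : ℝ → (H →ₗ.[ℂ] H))
    (hdense : ∀ t, Dense ((T t).domain : Set H)) (hclosed : ∀ t, (T t).IsClosed) :
    NMeas T ↔ NMeas (fun t => (T t).adjoint) :=
  ⟨.of_graph_eq_adjoint fun t => LinearPMap.adjoint_graph_eq_graph_adjoint (hdense t),
    .of_graph_eq_adjoint fun t => (hclosed t).graph_eq_adjoint_graph_adjoint (hdense t)⟩

/-- A family of densely defined closed operators is N-measurable iff the family
of adjoints is N-measurable. -/
theorem stmt_6 {H : Type*} [NormedAddCommGroup H] [InnerProductSpace ℂ H]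
    [CompleteSpace H] [TopologicalSpace.SeparableSpace H]
    (T : ℝ → (H →ₗ.[ℂ] H))
    (hdense : ∀ t, Dense ((T t).domain : Set H)) (hclosed : ∀ t, (T t).IsClosed) :
    NMeas T ↔ NMeas (fun t => (T t).adjoint) :=
  stmt_6_general T hdense hclosed
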